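/- For each n ≥ 1, g_{2n} = y + x^{2n} w is a ℂ[x]-coordinate of ℂ[x][y,z,u] if and only if the Vénéreau polynomial f_n = y + xⁿ v is a ℂ[x]-coordinate. -/

import Mathlib

/-!
Let `D` be the derivation of `R[x][y, z, u]` over `R[x]` with `D y = -2xv`, `D z = w + 2vp`,
`D u = 2p(xu - zp)`. Then `D p = D w = 0` and `D v = xw`, so `D` is locally nilpotent and, for
`s ∈ R[x]`, `exp (s D)` is an `R[x]`-automorphism sending `y + 2sxv` to `y + (sx)²w`; with
`s = x^(n-1)` it carries `y + 2xⁿv` to `g_{2n}`. On the other side, the diagonal automorphism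
`(y, z, u) ↦ (y/√2, √2 z, 2√2 u)` multiplies `p` by `2` and `v` by `√2`, hence sends `fₙ` to
`(y + 2xⁿv)/√2`, and unit multiples of coordinates are coordinates.
-/

open MvPolynomial

noncomputable section

section IsCoordinateOver

variable {R A B : Type*} [CommSemiring R] [Semiring A] [Algebra R A] [Semiring B] [Algebra R B]

variable (R) in
def IsCoordinateOver (a f : A) : Prop :=
  ∃ g h : A, Algebra.adjoin R ({a, f, g, h} : Set A) = ⊤

theorem IsCoordinateOver.map {a f : A} (hf : IsCoordinateOver R a f) (e : A →ₐ[R] B)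
    (he : Function.Surjective e) : IsCoordinateOver R (e a) (e f) := by
  obtain ⟨g, h, hgen⟩ := hf
  refine ⟨e g, e h, ?_⟩
  simpa only [← Set.image_singleton, ← Set.image_insert_eq, Algebra.adjoin_image, hgen,
    Algebra.map_top, AlgHom.range_eq_top] using he

theorem isCoordinateOver_map_iff (e : A ≃ₐ[R] B) {a f : A} :
    IsCoordinateOver R (e a) (e f) ↔ IsCoordinateOver R a f := by
  refine ⟨fun hf => ?_, fun hf => hf.map e.toAlgHom e.surjective⟩
  simpa using hf.map e.symm.toAlgHom e.symm.surjective

theorem IsCoordinateOver.of_smul {a f : A} {c : R} (hf : IsCoordinateOver R a (c • f)) :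
    IsCoordinateOver R a f := by
  obtain ⟨g, h, hgen⟩ := hf
  refine ⟨g, h, eq_top_iff.2 (hgen ▸ Algebra.adjoin_le ?_)⟩
  simp only [Set.insert_subset_iff, Set.singleton_subset_iff, SetLike.mem_coe]
  refine ⟨?_, Subalgebra.smul_mem _ ?_ c, ?_, ?_⟩ <;> exact Algebra.subset_adjoin (by simp)

theorem isCoordinateOver_smul_iff {a f : A} (c : Rˣ) :
    IsCoordinateOver R a (c • f) ↔ IsCoordinateOver R a f :=
  ⟨fun hf => hf.of_smul,
    fun hf => IsCoordinateOver.of_smul (c := (c⁻¹ : Rˣ)) (by rwa [← Units.smul_def, inv_smul_smul])⟩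

end IsCoordinateOver

def MvPolynomial.scaleVars {R σ : Type*} [CommSemiring R] (c : σ → Rˣ) :
    MvPolynomial σ R ≃ₐ[R] MvPolynomial σ R :=
  AlgEquiv.ofAlgHom (aeval fun i => c i • X i) (aeval fun i => (c i)⁻¹ • X i)
    (algHom_ext fun i => by simp [Units.smul_def, smul_smul])
    (algHom_ext fun i => by simp [Units.smul_def, smul_smul])

@[simp] lemma MvPolynomial.scaleVars_X {R σ : Type*} [CommSemiring R] (c : σ → Rˣ) (i : σ) :
    scaleVars c (X i) = c i • X i := by
  simp [scaleVars]

namespace Venereau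

variable {R : Type*} [CommRing R]

-- `x, y, z, u` are `X 0, X 1, X 2, X 3`.
def p : MvPolynomial (Fin 4) R := X 1 * X 3 + X 2 ^ 2

def v : MvPolynomial (Fin 4) R := X 0 * X 2 + X 1 * p

def w : MvPolynomial (Fin 4) R := X 0 ^ 2 * X 3 - 2 * X 0 * X 2 * p - X 1 * p ^ 2

-- `exp (s D)` written out: `D³` vanishes on `y`, `z` and `u`.
def shear (s : MvPolynomial (Fin 4) R) : MvPolynomial (Fin 4) R →ₐ[R] MvPolynomial (Fin 4) R :=
  aeval ![X 0, X 1 - 2 * s * X 0 * v - s ^ 2 * X 0 ^ 2 * w,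
    X 2 + s * (w + 2 * v * p) + s ^ 2 * X 0 * w * p,
    X 3 + 2 * s * p * (X 0 * X 3 - X 2 * p) + s ^ 2 * w * p ^ 2]

section

variable (s : MvPolynomial (Fin 4) R)

@[simp] lemma shear_X_zero : shear s (X 0) = X 0 := by simp [shear]

lemma shear_X_one : shear s (X 1) = X 1 - 2 * s * X 0 * v - s ^ 2 * X 0 ^ 2 * w := by
  simp [shear]

lemma shear_X_two : shear s (X 2) = X 2 + s * (w + 2 * v * p) + s ^ 2 * X 0 * w * p := by
  simp [shear]

lemma shear_X_three :
    shear s (X 3) = X 3 + 2 * s * p * (X 0 * X 3 - X 2 * p) + s ^ 2 * w * p ^ 2 := by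
  simp [shear]

@[simp] lemma shear_p : shear s p = p := by
  rw [p, map_add, map_mul, map_pow, shear_X_one, shear_X_two, shear_X_three, v, w, p]
  ring

@[simp] lemma shear_v : shear s v = v + s * X 0 * w := by
  rw [v, map_add, map_mul, map_mul, shear_X_zero, shear_X_one, shear_X_two, shear_p, v]
  ring

@[simp] lemma shear_w : shear s w = w := by
  simp only [w, map_sub, map_mul, map_pow, map_ofNat, shear_X_zero, shear_X_one, shear_X_two,
    shear_X_three, shear_p]
  rw [v]
  ring

end

lemma shear_eq_self_of_mem {s t : MvPolynomial (Fin 4) R} (ht : t ∈ Algebra.adjoin R {X 0}) :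
    shear s t = t :=
  AlgHom.adjoin_le_equalizer (shear s) (AlgHom.id R _) (by simp) ht

lemma shear_comp_shear_neg {s : MvPolynomial (Fin 4) R} (hs : s ∈ Algebra.adjoin R {X 0}) :
    (shear s).comp (shear (-s)) = AlgHom.id R _ := by
  have hss : shear s s = s := shear_eq_self_of_mem hs
  refine MvPolynomial.algHom_ext fun i => ?_
  fin_cases i <;> simp only [Fin.reduceFinMk, Fin.zero_eta, Fin.mk_one]
  · simp
  · simp only [AlgHom.comp_apply, shear_X_one, map_sub, map_mul, map_pow, map_neg, map_ofNat,
      shear_X_zero, shear_v, shear_w, hss, AlgHom.id_apply]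
    ring
  · simp only [AlgHom.comp_apply, shear_X_two, map_add, map_mul, map_pow, map_neg, map_ofNat,
      shear_X_zero, shear_v, shear_w, shear_p, hss, AlgHom.id_apply]
    rw [w, v]
    ring
  · simp only [AlgHom.comp_apply, shear_X_two, shear_X_three, map_add, map_sub, map_mul,
      map_pow, map_neg, map_ofNat, shear_X_zero, shear_w, shear_p, hss, AlgHom.id_apply]
    rw [w, v]
    ring

def shearEquiv {s : MvPolynomial (Fin 4) R} (hs : s ∈ Algebra.adjoin R {X 0}) :
    MvPolynomial (Fin 4) R ≃ₐ[R] MvPolynomial (Fin 4) R :=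
  AlgEquiv.ofAlgHom (shear s) (shear (-s)) (shear_comp_shear_neg hs)
    (by simpa using shear_comp_shear_neg (neg_mem hs))

@[simp] lemma shearEquiv_apply {s : MvPolynomial (Fin 4) R} (hs : s ∈ Algebra.adjoin R {X 0})
    (q : MvPolynomial (Fin 4) R) : shearEquiv hs q = shear s q :=
  rfl

lemma shear_y_add_two_mul_v {s : MvPolynomial (Fin 4) R} (hs : s ∈ Algebra.adjoin R {X 0}) :
    shear s (X 1 + 2 * (s * X 0) * v) = X 1 + (s * X 0) ^ 2 * w := by
  simp only [map_add, map_mul, map_ofNat, shear_X_zero, shear_X_one, shear_v,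
    shear_eq_self_of_mem hs]
  ring

lemma scaleVars_y_add_v (β : Rˣ) (hβ : (β : R) ^ 2 = 2) (n : ℕ) :
    scaleVars ![1, β⁻¹, β, β ^ 3] (X 1 + X 0 ^ n * v) = β⁻¹ • (X 1 + 2 * X 0 ^ n * v) := by
  set ρ := scaleVars (R := R) ![1, β⁻¹, β, β ^ 3]
  have hρ : ∀ i, ρ (X i) = C ((![1, β⁻¹, β, β ^ 3] i : Rˣ) : R) * X i := fun i => by
    rw [scaleVars_X, Units.smul_def, smul_eq_C_mul]
  have hinv : (C ((β⁻¹ : Rˣ) : R) : MvPolynomial (Fin 4) R) * C (β : R) = 1 := by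
    rw [← C_mul, Units.inv_mul, C_1]
  have htwo : (C (β : R) : MvPolynomial (Fin 4) R) = 2 * C ((β⁻¹ : Rˣ) : R) := by
    rw [← map_ofNat C 2, ← C_mul, ← hβ, pow_two, mul_assoc, Units.mul_inv, mul_one]
  have hp : ρ p = C (β : R) ^ 2 * p := by
    simp only [p, map_add, map_mul, map_pow, hρ, Matrix.cons_val, Units.val_pow_eq_pow_val]
    linear_combination (C (β : R) ^ 2 * X 1 * X 3) * hinv
  have hv : ρ v = C (β : R) * v := by
    simp only [v, map_add, map_mul, hp, hρ, Matrix.cons_val, Units.val_one, C_1, one_mul]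
    linear_combination (C (β : R) * X 1 * p) * hinv
  simp only [map_add, map_mul, map_pow, hv, hρ, Matrix.cons_val, Units.val_one, C_1, one_mul,
    Units.smul_def, smul_eq_C_mul]
  linear_combination (X 0 ^ n * v) * htwo

theorem isCoordinateOver_y_add_w_iff (β : Rˣ) (hβ : (β : R) ^ 2 = 2) {n : ℕ} (hn : 1 ≤ n) :
    IsCoordinateOver R (X 0 : MvPolynomial (Fin 4) R) (X 1 + X 0 ^ (2 * n) * w) ↔
      IsCoordinateOver R (X 0 : MvPolynomial (Fin 4) R) (X 1 + X 0 ^ n * v) := by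
  have hs : (X 0 ^ (n - 1) : MvPolynomial (Fin 4) R) ∈ Algebra.adjoin R {X 0} :=
    pow_mem (Algebra.subset_adjoin (Set.mem_singleton _)) _
  have hτ : shearEquiv hs (X 1 + 2 * X 0 ^ n * v) = X 1 + X 0 ^ (2 * n) * w := by
    have h := shear_y_add_two_mul_v hs
    rwa [← pow_succ, Nat.sub_add_cancel hn, ← pow_mul'] at h
  let ρ := scaleVars (R := R) ![1, β⁻¹, β, β ^ 3]
  calc IsCoordinateOver R (X 0) (X 1 + X 0 ^ (2 * n) * w)
      ↔ IsCoordinateOver R (shearEquiv hs (X 0)) (shearEquiv hs (X 1 + 2 * X 0 ^ n * v)) := by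
        rw [hτ, shearEquiv_apply, shear_X_zero]
    _ ↔ IsCoordinateOver R (X 0) (β⁻¹ • (X 1 + 2 * X 0 ^ n * v)) :=
        (isCoordinateOver_map_iff _).trans (isCoordinateOver_smul_iff _).symm
    _ ↔ IsCoordinateOver R (ρ (X 0)) (ρ (X 1 + X 0 ^ n * v)) := by
        rw [scaleVars_y_add_v β hβ, scaleVars_X, Matrix.cons_val_zero, one_smul]
    _ ↔ IsCoordinateOver R (X 0) (X 1 + X 0 ^ n * v) := isCoordinateOver_map_iff ρ

end Venereau

end

/-- For each n ≥ 1, g_{2n} = y + x^{2n} w is a ℂ[x]-coordinate of ℂ[x][y,z,u]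
if and only if the Vénéreau polynomial fₙ = y + xⁿ v is. -/
theorem stmt13 :
    let x : MvPolynomial (Fin 4) ℂ := X 0
    let y : MvPolynomial (Fin 4) ℂ := X 1
    let z : MvPolynomial (Fin 4) ℂ := X 2
    let u : MvPolynomial (Fin 4) ℂ := X 3
    let p := y * u + z ^ 2
    let v := x * z + y * p
    let w := x ^ 2 * u - 2 * x * z * p - y * p ^ 2
    ∀ n : ℕ, 1 ≤ n →
      ((∃ g h : MvPolynomial (Fin 4) ℂ,
          Algebra.adjoin ℂ ({x, y + x ^ (2 * n) * w, g, h} :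
            Set (MvPolynomial (Fin 4) ℂ)) = ⊤) ↔
        (∃ g h : MvPolynomial (Fin 4) ℂ,
          Algebra.adjoin ℂ ({x, y + x ^ n * v, g, h} :
            Set (MvPolynomial (Fin 4) ℂ)) = ⊤)) := by
  intro x y z u p v w n hn
  obtain ⟨β, hβ⟩ := IsAlgClosed.exists_pow_nat_eq (2 : ℂ) two_pos
  have hβ0 : β ≠ 0 := by rintro rfl; norm_num at hβ
  exact Venereau.isCoordinateOver_y_add_w_iff (Units.mk0 β hβ0) hβ hn
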